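/- arXiv:2305.17526 — 3 statements merged into one kernel-verified Lean document; each statement's English description precedes it below -/
import Mathlib

section
/- Let Γ be a finite set of predicates over D and let ≥ be defined on predicates by α ≥ β iff *α ⊇ *β. If c^ρ_{ij} ≤ 0 for all soft constraints, then the dynamic programming values W_s(α) = min over words x of length s with x ∈ *α of F_s(x) satisfy the recurrence W_s(α) = min{ min over edges (α,β) of the Hasse diagram of (closure(Γ^∩), ≥) of W_s(β), W_{s-1}(α⁻) + φ_s(α) }, where φ_s(α) = Σ over β ∈ Γ with β ≥ α and (β, s−‖β‖+1, s) in the instance of c^β_{s−‖β‖+1, s}. -/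
open scoped Classical

noncomputable section

/-- A predicate of arity `ar` over `D`: a set of words over `D`, all of length `ar`. -/
structure GPred (D : Type*) where
  ar : ℕ
  s : Set (List D)
  len : ∀ w ∈ s, w.length = ar

namespace GPred

variable {D : Type*}

/-- `*α`: the set of words whose suffix of length `α.ar` lies in `α`. -/
def star (α : GPred D) : Set (List D) :=
  {w | α.ar ≤ w.length ∧ w.drop (w.length - α.ar) ∈ α.s}

/-- The operation `α | β`: restrict the longer predicate to tuples whose suffix lies
in the shorter one. -/
def bar (α β : GPred D) : GPred D :=
  if β.ar ≤ α.ar then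
    ⟨α.ar, {w | w ∈ α.s ∧ w.drop (α.ar - β.ar) ∈ β.s}, fun w hw => α.len w hw.1⟩
  else
    ⟨β.ar, {w | w ∈ β.s ∧ w.drop (β.ar - α.ar) ∈ α.s}, fun w hw => β.len w hw.1⟩

/-- `α⁻`: drop the last coordinate. -/
def minus (α : GPred D) : GPred D :=
  ⟨α.ar - 1, {w | ∃ a : D, w ++ [a] ∈ α.s}, by
    rintro w ⟨a, ha⟩
    have h := α.len _ ha
    simp at h
    omega⟩

/-- `α⁻ × {a}`. -/
def sufSingle (α : GPred D) (a : D) : GPred D :=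
  ⟨α.ar, {w | ∃ w', (∃ b : D, w' ++ [b] ∈ α.s) ∧ w = w' ++ [a]}, by
    rintro w ⟨w', ⟨b, hb⟩, rfl⟩
    have h := α.len _ hb
    simp at h ⊢
    omega⟩

/-- Prefix projection `α_{1:i}`. -/
def prefProj (α : GPred D) (i : ℕ) : GPred D :=
  ⟨i, {w | w.length = i ∧ ∃ t, w ++ t ∈ α.s}, fun _ hw => hw.1⟩

/-- Suffix projection of length `i`, i.e. `α_{‖α‖-i+1:‖α‖}`. -/
def sufProj (α : GPred D) (i : ℕ) : GPred D :=
  ⟨i, {w | w.length = i ∧ ∃ t, t ++ w ∈ α.s}, fun _ hw => hw.1⟩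

/-- A predicate is simple if it is a cartesian product of subsets of `D`. -/
def IsSimple (α : GPred D) : Prop :=
  ∃ Ωs : List (Set D), α.ar = Ωs.length ∧ α.s = {w | List.Forall₂ (· ∈ ·) w Ωs}

/-- `α ≥ β` iff `*α ⊇ *β`. -/
def pge (α β : GPred D) : Prop := β.star ⊆ α.star

/-- `α > β`. -/
def pgt (α β : GPred D) : Prop := pge α β ∧ α ≠ β

/-- `β ⊊ α`: strict inclusion of predicates of equal arity. -/
def pssub (β α : GPred D) : Prop := β.ar = α.ar ∧ β.s ⊂ α.s

/-- `α ≻ β` iff `‖β‖ > ‖α‖` and the suffix projection `β_{‖β‖-‖α‖+1:‖β‖} ⊆ α`. -/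
def psucc (α β : GPred D) : Prop := α.ar < β.ar ∧ (β.sufProj α.ar).s ⊆ α.s

/-- `α ⪰ β`. -/
def psucceq (α β : GPred D) : Prop := psucc α β ∨ α = β

def PrefClosed (G : Set (GPred D)) : Prop := ∀ ρ ∈ G, 1 ≤ ρ.ar → ρ.minus ∈ G

def InterClosed (G : Set (GPred D)) : Prop := ∀ α ∈ G, ∀ β ∈ G, α.bar β ∈ G

def SSClosed (G : Set (GPred D)) : Prop := ∀ ρ ∈ G, 1 ≤ ρ.ar → ∀ a : D, ρ.sufSingle a ∈ G

/-- `closure(Γ^∩)`: the smallest prefix- and intersection-closed superset of `Γ`. -/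
def piClosure (Γ : Set (GPred D)) : Set (GPred D) :=
  ⋂₀ {G | Γ ⊆ G ∧ PrefClosed G ∧ InterClosed G}

/-- `Γ*`: the smallest prefix-, intersection- and singleton-suffix-closed superset of `Γ`. -/
def fullClosure (Γ : Set (GPred D)) : Set (GPred D) :=
  ⋂₀ {G | Γ ⊆ G ∧ PrefClosed G ∧ InterClosed G ∧ SSClosed G}

/-- `Γ°`: the singleton suffix closure `Γ ∪ {ρ⁻ × {a} : ρ ∈ Γ, a ∈ D}`. -/
def sscSet (Γ : Set (GPred D)) : Set (GPred D) :=
  Γ ∪ {σ | ∃ ρ ∈ Γ, 1 ≤ ρ.ar ∧ ∃ a : D, σ = ρ.sufSingle a}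

/-- Edges of the Hasse diagram of `(G, ≥)`. -/
def HasseGe (G : Set (GPred D)) (α β : GPred D) : Prop :=
  α ∈ G ∧ β ∈ G ∧ pgt α β ∧ ¬ ∃ γ ∈ G, pgt α γ ∧ pgt γ β

/-- Edges of the Hasse diagram of `(G, ⊇)`. -/
def HasseSub (G : Set (GPred D)) (α β : GPred D) : Prop :=
  α ∈ G ∧ β ∈ G ∧ pssub β α ∧ ¬ ∃ γ ∈ G, pssub γ α ∧ pssub β γ

/-- Edges of the graph `G[G]`. -/
def EdgeG (G : Set (GPred D)) (α β : GPred D) : Prop :=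
  α ∈ G ∧ β ∈ G ∧ psucc α β ∧
    ¬ ∃ γ ∈ G, (psucc α γ ∧ psucc γ β) ∨ (pssub γ α ∧ psucc γ β)

/-- `X_s(α; G)`. -/
def X (s : ℕ) (α : GPred D) (G : Set (GPred D)) : Set (List D) :=
  {x | x.length = s ∧ x ∈ α.star ∧ ∀ β ∈ G, pgt α β → x ∉ β.star}

/-- `X_s(α)`. -/
def Xall (s : ℕ) (α : GPred D) : Set (List D) :=
  {x | x.length = s ∧ x ∈ α.star}

/-- Projection of `α` onto its last coordinate. -/
def projLast (α : GPred D) : Set D := {a | ∃ w, w ++ [a] ∈ α.s}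

/-- The cartesian-product predicate `Ω₁ × ⋯ × Ω_l`. -/
def predOfList (Ωs : List (Set D)) : GPred D :=
  ⟨Ωs.length, {w | List.Forall₂ (· ∈ ·) w Ωs}, fun _ hw => List.Forall₂.length_eq hw⟩

end GPred

namespace GPred

variable {D : Type*}

/-- The set `Λ` of constraint triples `(ρ, i, j)`: `ρ ∈ Γ`, `j - i = ‖ρ‖ - 1`,
`[i,j] ⊆ [1,n]`. -/
def Lam (Γ : Set (GPred D)) (n : ℕ) (ρ : GPred D) (i j : ℕ) : Prop :=
  ρ ∈ Γ ∧ 1 ≤ i ∧ j ≤ n ∧ j + 1 = i + ρ.ar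

/-- `f^ρ_{ij}(x_{i:j})`: the weight `c^ρ_{ij}` if `x_{i:j} ∈ ρ`, else `0`. -/
def fcost (c : GPred D → ℕ → ℕ → ℝ) (ρ : GPred D) (i j : ℕ) (x : List D) : ℝ :=
  if (x.drop (i - 1)).take ρ.ar ∈ ρ.s then c ρ i j else 0

/-- The partial cost `F_s(x)`: sum over constraints `(ρ,i,j) ∈ Λ` with `j ≤ s`. -/
def Fpart (Γ : Set (GPred D)) (n : ℕ) (c : GPred D → ℕ → ℕ → ℝ) (s : ℕ)
    (x : List D) : ℝ :=
  ∑ᶠ ρ : GPred D, ∑ᶠ i : ℕ, ∑ᶠ j : ℕ,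
    if Lam Γ n ρ i j ∧ j ≤ s then fcost c ρ i j x else 0

/-- `W_s(α) = min {F_s(x) : x ∈ D^s ∩ *α}` (as an infimum in `EReal`). -/
def W (Γ : Set (GPred D)) (n : ℕ) (c : GPred D → ℕ → ℕ → ℝ) (s : ℕ)
    (α : GPred D) : EReal :=
  sInf {z : EReal | ∃ x : List D, x.length = s ∧ x ∈ α.star ∧
    z = ((Fpart Γ n c s x : ℝ) : EReal)}

/-- `φ_s(α) = Σ_{β ∈ Γ, β ≥ α, (β, s-‖β‖+1, s) ∈ Λ} c^β_{s-‖β‖+1, s}`. -/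
def phi (Γ : Set (GPred D)) (n : ℕ) (c : GPred D → ℕ → ℕ → ℝ) (s : ℕ)
    (α : GPred D) : ℝ :=
  ∑ᶠ β : GPred D, ∑ᶠ i : ℕ,
    if β ∈ Γ ∧ pge β α ∧ Lam Γ n β i s then c β i s else 0

/-!
Both inequalities compare `F_s` on a word `x` of length `s` with `F_{s-1}` on its prefix: the
difference is the total weight of the constraints ending at `s` that `x` satisfies, i.e. of the
`ρ ∈ Γ` with `x ∈ *ρ`. Those with `ρ ≥ α` are satisfied by every `x ∈ *α` and make up `φ_s(α)`;
the others have nonpositive weight, which gives `W_s(α) ≤ W_{s-1}(α⁻) + φ_s(α)` by extending an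
optimal word for `α⁻`. Conversely, let `x ∈ *α`. If `x ∈ *β` for some `β < α` in
`closure(Γ^∩)`, then, since only finitely many predicates of arity `≤ s` exist, `x` lies in `*γ`
for a Hasse successor `γ` of `α`. Otherwise `α` is the least predicate of the closure whose star
contains `x`; as `*(α|ρ) = *α ∩ *ρ`, every `ρ ∈ Γ` with `x ∈ *ρ` then satisfies `ρ ≥ α`, and
`F_s(x) = F_{s-1}(x_{1:s-1}) + φ_s(α)`.
-/

end GPred

theorem finsum_finsum_eq_sum_sum {ι κ M : Type*} [AddCommMonoid M] {f : ι → κ → M}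
    (s : Finset ι) (t : Finset κ) (h : ∀ a b, f a b ≠ 0 → a ∈ s ∧ b ∈ t) :
    ∑ᶠ a, ∑ᶠ b, f a b = ∑ a ∈ s, ∑ b ∈ t, f a b := by
  have hinner : ∀ a, ∑ᶠ b, f a b = ∑ b ∈ t, f a b := fun a =>
    finsum_eq_sum_of_support_subset _ fun b hb => (h a b hb).2
  simp only [hinner]
  refine finsum_eq_sum_of_support_subset _ fun a ha => ?_
  obtain ⟨b, -, hb⟩ := Finset.exists_ne_zero_of_sum_ne_zero ha
  exact (h a b hb).1

theorem finsum_finsum_add {ι κ M : Type*} [AddCommMonoid M] {f g : ι → κ → M}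
    (s : Finset ι) (t : Finset κ) (hf : ∀ a b, f a b ≠ 0 → a ∈ s ∧ b ∈ t)
    (hg : ∀ a b, g a b ≠ 0 → a ∈ s ∧ b ∈ t) :
    ∑ᶠ a, ∑ᶠ b, (f a b + g a b) = ∑ᶠ a, ∑ᶠ b, f a b + ∑ᶠ a, ∑ᶠ b, g a b := by
  have hfg : ∀ a b, f a b + g a b ≠ 0 → a ∈ s ∧ b ∈ t := fun a b hab => by
    by_cases hfab : f a b = 0
    · exact hg a b (by simpa [hfab] using hab)
    · exact hf a b hfab
  simp only [finsum_finsum_eq_sum_sum s t hf, finsum_finsum_eq_sum_sum s t hg,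
    finsum_finsum_eq_sum_sum s t hfg, Finset.sum_add_distrib]

namespace GPred

variable {D : Type*}

@[ext]
theorem ext {α β : GPred D} (har : α.ar = β.ar) (hs : α.s = β.s) : α = β := by
  cases α; cases β; simp_all

theorem mem_s_iff {α : GPred D} {w : List D} : w ∈ α.s ↔ w.length = α.ar ∧ w ∈ α.star := by
  constructor
  · intro hw
    have hl := α.len w hw
    exact ⟨hl, hl.ge, by simpa [hl] using hw⟩
  · rintro ⟨hl, -, hw⟩
    simpa [hl] using hw

theorem ar_le_of_star_subset {α β : GPred D} (h : α.star ⊆ β.star) (hne : α.star.Nonempty) :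
    β.ar ≤ α.ar := by
  obtain ⟨w, -, hw⟩ := hne
  have hsuffix := mem_s_iff.1 hw
  simpa [hsuffix.1] using (h hsuffix.2).1

theorem eq_of_star_eq {α β : GPred D} (h : α.star = β.star) (hne : α.star.Nonempty) :
    α = β := by
  have har : α.ar = β.ar :=
    le_antisymm (ar_le_of_star_subset h.ge (h ▸ hne)) (ar_le_of_star_subset h.le hne)
  ext1
  · exact har
  · ext w
    rw [mem_s_iff, mem_s_iff, har, h]

theorem star_bar (α β : GPred D) : (α.bar β).star = α.star ∩ β.star := by
  have key : ∀ α β : GPred D, β.ar ≤ α.ar →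
      (GPred.mk α.ar {w | w ∈ α.s ∧ w.drop (α.ar - β.ar) ∈ β.s}
        (fun w hw => α.len w hw.1)).star = α.star ∩ β.star := by
    intro α β hle
    ext w
    simp only [star, Set.mem_ofPred_eq, Set.mem_inter_iff, List.drop_drop]
    constructor
    · rintro ⟨hl, hα, hβ⟩
      refine ⟨⟨hl, hα⟩, hle.trans hl, ?_⟩
      rwa [show w.length - α.ar + (α.ar - β.ar) = w.length - β.ar by omega] at hβ
    · rintro ⟨⟨hl, hα⟩, -, hβ⟩
      refine ⟨hl, hα, ?_⟩
      rwa [show w.length - α.ar + (α.ar - β.ar) = w.length - β.ar by omega]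
  unfold bar
  split_ifs with hle
  · exact key α β hle
  · rw [key β α (by omega), Set.inter_comm]

theorem mem_minus_star_iff {α : GPred D} (har : 1 ≤ α.ar) {x : List D} :
    x ∈ α.minus.star ↔ ∃ a, x ++ [a] ∈ α.star := by
  have hdrop : ∀ a : D, (x ++ [a]).drop (x.length + 1 - α.ar) =
      x.drop (x.length - (α.ar - 1)) ++ [a] := fun a => by
    rw [show x.length + 1 - α.ar = x.length - (α.ar - 1) by omega,
      List.drop_append_of_le_length (by omega)]
  simp only [star, minus, Set.mem_ofPred_eq, List.length_append, List.length_singleton, hdrop]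
  constructor
  · rintro ⟨hl, a, ha⟩
    exact ⟨a, by omega, ha⟩
  · rintro ⟨a, hl, ha⟩
    exact ⟨by omega, a, ha⟩

theorem finite_setOf_ar_le [Finite D] (N : ℕ) : {ρ : GPred D | ρ.ar ≤ N}.Finite := by
  have himage : ((fun ρ : GPred D => (ρ.ar, ρ.s)) '' {ρ | ρ.ar ≤ N}).Finite := by
    refine ((Set.finite_Iic N).prod (List.finite_length_le D N).finite_subsets).subset ?_
    rintro _ ⟨ρ, hρ, rfl⟩
    exact ⟨hρ, fun w hw => (ρ.len w hw).trans_le hρ⟩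
  exact himage.of_finite_image fun ρ _ σ _ h =>
    ext (congrArg Prod.fst h) (congrArg Prod.snd h)

theorem subset_piClosure (Γ : Set (GPred D)) : Γ ⊆ piClosure Γ :=
  fun _ hρ => Set.mem_sInter.2 fun _ hG => hG.1 hρ

theorem interClosed_piClosure (Γ : Set (GPred D)) : InterClosed (piClosure Γ) :=
  fun α hα β hβ => Set.mem_sInter.2 fun G hG =>
    hG.2.2 α (Set.mem_sInter.1 hα G hG) β (Set.mem_sInter.1 hβ G hG)

theorem exists_hasseGe_mem_star [Finite D] {G : Set (GPred D)} {α β : GPred D} {x : List D}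
    (hα : α ∈ G) (hβ : β ∈ G) (hαβ : pgt α β) (hx : x ∈ β.star) :
    ∃ γ, HasseGe G α γ ∧ x ∈ γ.star := by
  set S := {γ : GPred D | γ ∈ G ∧ pgt α γ ∧ x ∈ γ.star}
  have hS : S.Finite := (finite_setOf_ar_le x.length).subset fun γ hγ => hγ.2.2.1
  obtain ⟨γ, ⟨hγG, hαγ, hxγ⟩, hmax⟩ := hS.exists_maximalFor star S ⟨β, hβ, hαβ, hx⟩
  refine ⟨γ, ⟨hα, hγG, hαγ, ?_⟩, hxγ⟩
  rintro ⟨δ, hδG, hαδ, hδγ, hne⟩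
  have hδγ' : δ.star ⊆ γ.star := hmax ⟨hδG, hαδ, hδγ hxγ⟩ hδγ
  exact hne (eq_of_star_eq (hδγ'.antisymm hδγ) ⟨x, hδγ hxγ⟩)

theorem InterClosed.pge_of_mem_star {G : Set (GPred D)} (hG : InterClosed G)
    {α ρ : GPred D} {x : List D} (hα : α ∈ G) (hρ : ρ ∈ G) (hxα : x ∈ α.star)
    (hxρ : x ∈ ρ.star) (hmin : ∀ β ∈ G, pgt α β → x ∉ β.star) : pge ρ α := by
  have hαbar : pge α (α.bar ρ) := by
    rw [pge, star_bar]
    exact Set.inter_subset_left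
  have heq : α = α.bar ρ := by
    by_contra hne
    exact hmin _ (hG α hα ρ hρ) ⟨hαbar, hne⟩ (by rw [star_bar]; exact ⟨hxα, hxρ⟩)
  intro y hy
  rw [heq, star_bar] at hy
  exact hy.2

theorem Lam.mem_toFinset_of_ar_le [Finite D] {Γ : Set (GPred D)} {n : ℕ} {ρ : GPred D}
    {i j : ℕ} (h : Lam Γ n ρ i j) :
    ρ ∈ (finite_setOf_ar_le n).toFinset ∧ i ∈ Finset.Iic (n + 1) := by
  obtain ⟨-, hi, hj, he⟩ := h
  simp only [Set.Finite.mem_toFinset, Set.mem_ofPred_eq, Finset.mem_Iic]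
  omega

section Cost

variable {Γ : Set (GPred D)} {n : ℕ} {c : GPred D → ℕ → ℕ → ℝ}

theorem fcost_append {ρ : GPred D} {i j : ℕ} (hL : Lam Γ n ρ i j) {x : List D}
    (hj : j ≤ x.length) (y : List D) : fcost c ρ i j (x ++ y) = fcost c ρ i j x := by
  obtain ⟨-, hi, -, he⟩ := hL
  rw [fcost, fcost, List.drop_append_of_le_length (by omega),
    List.take_append_of_le_length (by rw [List.length_drop]; omega)]

theorem fcost_of_length_eq {ρ : GPred D} {i j : ℕ} (hL : Lam Γ n ρ i j) {x : List D}
    (hx : x.length = j) : fcost c ρ i j x = if x ∈ ρ.star then c ρ i j else 0 := by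
  obtain ⟨-, hi, -, he⟩ := hL
  have hdrop : x.drop (i - 1) = x.drop (x.length - ρ.ar) := by congr 1; omega
  have hstar : x ∈ ρ.star ↔ x.drop (x.length - ρ.ar) ∈ ρ.s :=
    and_iff_right (by omega)
  rw [fcost, hdrop, List.take_of_length_le (by rw [List.length_drop]; omega), hstar]

theorem Fpart_append {s : ℕ} {x : List D} (hx : x.length = s) (y : List D) :
    Fpart Γ n c s (x ++ y) = Fpart Γ n c s x := by
  refine finsum_congr fun ρ => finsum_congr fun i => finsum_congr fun j => ?_
  by_cases h : Lam Γ n ρ i j ∧ j ≤ s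
  · rw [if_pos h, if_pos h, fcost_append h.1 (hx ▸ h.2)]
  · rw [if_neg h, if_neg h]

variable (Γ n c) in
/-- For `|x| = s`, the part of `F_s(x)` coming from the constraints that end at position `s`:
for those, `x_{i:s} ∈ ρ` iff `x ∈ *ρ`. -/
def lastSlice (s : ℕ) (x : List D) : ℝ :=
  ∑ᶠ ρ : GPred D, ∑ᶠ i : ℕ, if Lam Γ n ρ i s ∧ x ∈ ρ.star then c ρ i s else 0

theorem finsum_fcost_le_succ {s : ℕ} {x : List D} (hx : x.length = s + 1) (ρ : GPred D)
    (i : ℕ) :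
    ∑ᶠ j, (if Lam Γ n ρ i j ∧ j ≤ s + 1 then fcost c ρ i j x else 0) =
      ∑ᶠ j, (if Lam Γ n ρ i j ∧ j ≤ s then fcost c ρ i j x else 0) +
        if Lam Γ n ρ i (s + 1) ∧ x ∈ ρ.star then c ρ i (s + 1) else 0 := by
  have hsplit : ∀ j, (if Lam Γ n ρ i j ∧ j ≤ s + 1 then fcost c ρ i j x else 0) =
      (if Lam Γ n ρ i j ∧ j ≤ s then fcost c ρ i j x else 0) +
        if j = s + 1 then (if Lam Γ n ρ i j ∧ x ∈ ρ.star then c ρ i j else 0) else 0 := by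
    intro j
    by_cases hL : Lam Γ n ρ i j
    · rcases Nat.lt_or_ge s j with hj | hj
      · obtain rfl | hj' := eq_or_ne j (s + 1)
        · simp [hL, fcost_of_length_eq hL hx]
        · simp [hL, hj', show ¬ j ≤ s + 1 by omega, show ¬ j ≤ s by omega]
      · simp [hL, hj, show j ≤ s + 1 by omega, show j ≠ s + 1 by omega]
    · simp [hL]
  have hsingle : ∑ᶠ j, (if j = s + 1 then
      (if Lam Γ n ρ i j ∧ x ∈ ρ.star then c ρ i j else 0) else 0) =
      if Lam Γ n ρ i (s + 1) ∧ x ∈ ρ.star then c ρ i (s + 1) else 0 :=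
    (finsum_eq_single _ (s + 1) fun j hj => if_neg hj).trans (if_pos rfl)
  rw [finsum_congr hsplit, finsum_add_distrib, hsingle]
  · refine (Set.finite_Iic n).subset fun j hj => ?_
    by_contra hjn
    exact hj (if_neg fun h => hjn h.1.2.2.1)
  · exact (Set.finite_singleton (s + 1)).subset fun j hj => by
      by_contra hjs
      exact hj (if_neg hjs)

theorem Fpart_succ [Finite D] {s : ℕ} {x : List D} (hx : x.length = s + 1) :
    Fpart Γ n c (s + 1) x = Fpart Γ n c s x + lastSlice Γ n c (s + 1) x := by
  rw [Fpart, finsum_congr fun ρ => finsum_congr (finsum_fcost_le_succ hx ρ), lastSlice,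
    finsum_finsum_add (finite_setOf_ar_le n).toFinset (Finset.Iic (n + 1))]
  · rfl
  · intro ρ i h
    obtain ⟨j, hj⟩ : ∃ j, (if Lam Γ n ρ i j ∧ j ≤ s then fcost c ρ i j x else 0) ≠ 0 := by
      by_contra! h0
      exact h (finsum_eq_zero_of_forall_eq_zero h0)
    exact Lam.mem_toFinset_of_ar_le (of_not_not fun hL => hj (if_neg fun h => hL h.1))
  · intro ρ i h
    exact Lam.mem_toFinset_of_ar_le (of_not_not fun hL => h (if_neg fun h => hL h.1))

theorem lastSlice_le_phi [Finite D] (hneg : ∀ ρ i j, Lam Γ n ρ i j → c ρ i j ≤ 0)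
    {s : ℕ} {α : GPred D} {x : List D} (hx : x ∈ α.star) :
    lastSlice Γ n c s x ≤ phi Γ n c s α := by
  rw [lastSlice, phi,
    finsum_finsum_eq_sum_sum (finite_setOf_ar_le n).toFinset (Finset.Iic (n + 1))
      fun ρ i h => Lam.mem_toFinset_of_ar_le (of_not_not fun hL => h (if_neg fun h => hL h.1)),
    finsum_finsum_eq_sum_sum (finite_setOf_ar_le n).toFinset (Finset.Iic (n + 1))
      fun ρ i h => Lam.mem_toFinset_of_ar_le (of_not_not fun hL => h (if_neg fun h => hL h.2.2))]
  refine Finset.sum_le_sum fun ρ _ => Finset.sum_le_sum fun i _ => ?_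
  by_cases hφ : ρ ∈ Γ ∧ pge ρ α ∧ Lam Γ n ρ i s
  · rw [if_pos hφ, if_pos ⟨hφ.2.2, hφ.2.1 hx⟩]
  · rw [if_neg hφ]
    split_ifs with h
    exacts [hneg ρ i s h.1, le_rfl]

theorem lastSlice_eq_phi {s : ℕ} {α : GPred D} {x : List D} (hx : x ∈ α.star)
    (h : ∀ ρ ∈ Γ, x ∈ ρ.star → pge ρ α) : lastSlice Γ n c s x = phi Γ n c s α := by
  refine finsum_congr fun ρ => finsum_congr fun i => if_congr ?_ rfl rfl
  exact ⟨fun ⟨hL, hxρ⟩ => ⟨hL.1, h ρ hL.1 hxρ, hL⟩, fun ⟨_, hρα, hL⟩ => ⟨hL, hρα hx⟩⟩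

theorem W_le {s : ℕ} {α : GPred D} {x : List D} (hx : x.length = s) (hxα : x ∈ α.star) :
    W Γ n c s α ≤ (Fpart Γ n c s x : EReal) :=
  sInf_le ⟨x, hx, hxα, rfl⟩

theorem W_anti {s : ℕ} {α β : GPred D} (h : pge α β) : W Γ n c s α ≤ W Γ n c s β :=
  sInf_le_sInf fun _ ⟨x, hx, hxβ, hz⟩ => ⟨x, hx, h hxβ, hz⟩

theorem exists_W_eq [Finite D] {s : ℕ} {α : GPred D}
    (h : ∃ x : List D, x.length = s ∧ x ∈ α.star) :
    ∃ x : List D, x.length = s ∧ x ∈ α.star ∧ W Γ n c s α = (Fpart Γ n c s x : EReal) := by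
  obtain ⟨x, hx, hxα⟩ := h
  have hfin : {z : EReal | ∃ x : List D, x.length = s ∧ x ∈ α.star ∧
      z = (Fpart Γ n c s x : EReal)}.Finite := by
    refine ((List.finite_length_eq D s).image fun x => (Fpart Γ n c s x : EReal)).subset ?_
    rintro _ ⟨y, hy, -, rfl⟩
    exact ⟨y, hy, rfl⟩
  exact Set.Nonempty.csInf_mem (by exact ⟨_, x, hx, hxα, rfl⟩) hfin

theorem W_eq_top {s : ℕ} {α : GPred D} (h : ¬ ∃ x : List D, x.length = s ∧ x ∈ α.star) :
    W Γ n c s α = ⊤ :=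
  sInf_eq_top.2 fun _ ⟨x, hx, hxα, _⟩ => absurd ⟨x, hx, hxα⟩ h

theorem W_succ_le [Finite D] (hneg : ∀ ρ i j, Lam Γ n ρ i j → c ρ i j ≤ 0) {s : ℕ}
    {α : GPred D} (har : 1 ≤ α.ar) :
    W Γ n c (s + 1) α ≤ W Γ n c s α.minus + (phi Γ n c (s + 1) α : EReal) := by
  by_cases hne : ∃ x : List D, x.length = s ∧ x ∈ α.minus.star
  · obtain ⟨x, hx, hxα, hW⟩ := exists_W_eq (n := n) (c := c) hne
    obtain ⟨a, hxa⟩ := (mem_minus_star_iff har).1 hxα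
    have hlen : (x ++ [a]).length = s + 1 := by simp [hx]
    calc W Γ n c (s + 1) α ≤ (Fpart Γ n c (s + 1) (x ++ [a]) : EReal) := W_le hlen hxa
      _ = (Fpart Γ n c s x : EReal) + (lastSlice Γ n c (s + 1) (x ++ [a]) : EReal) := by
        rw [Fpart_succ hlen, Fpart_append hx, EReal.coe_add]
      _ ≤ W Γ n c s α.minus + (phi Γ n c (s + 1) α : EReal) := by
        rw [hW]
        gcongr
        exact lastSlice_le_phi hneg hxa
  · rw [W_eq_top hne, EReal.top_add_coe]
    exact le_top

theorem min_le_W_succ [Finite D] {G : Set (GPred D)} (hΓG : Γ ⊆ G) (hG : InterClosed G)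
    {s : ℕ} {α : GPred D} (hα : α ∈ G) (har : 1 ≤ α.ar) :
    min (sInf {z : EReal | ∃ β : GPred D, HasseGe G α β ∧ z = W Γ n c (s + 1) β})
        (W Γ n c s α.minus + (phi Γ n c (s + 1) α : EReal)) ≤ W Γ n c (s + 1) α := by
  refine le_sInf ?_
  rintro _ ⟨x, hx, hxα, rfl⟩
  by_cases hbelow : ∃ β ∈ G, pgt α β ∧ x ∈ β.star
  · obtain ⟨β, hβ, hαβ, hxβ⟩ := hbelow
    obtain ⟨γ, hαγ, hxγ⟩ := exists_hasseGe_mem_star hα hβ hαβ hxβ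
    refine (min_le_left _ _).trans ?_
    exact le_trans (sInf_le ⟨γ, hαγ, rfl⟩) (W_le hx hxγ)
  · push Not at hbelow
    obtain ⟨y, a, rfl⟩ : ∃ y a, x = y ++ [a] :=
      (List.eq_nil_or_concat' x).resolve_left (by rintro rfl; simp at hx)
    have hy : y.length = s := by simpa using hx
    have hφ : lastSlice Γ n c (s + 1) (y ++ [a]) = phi Γ n c (s + 1) α :=
      lastSlice_eq_phi hxα fun ρ hρ hxρ =>
        hG.pge_of_mem_star hα (hΓG hρ) hxα hxρ hbelow
    calc _ ≤ W Γ n c s α.minus + (phi Γ n c (s + 1) α : EReal) := min_le_right _ _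
      _ ≤ (Fpart Γ n c s y : EReal) + (phi Γ n c (s + 1) α : EReal) := by
        gcongr
        exact W_le hy ((mem_minus_star_iff har).2 ⟨a, hxα⟩)
      _ = (Fpart Γ n c (s + 1) (y ++ [a]) : EReal) := by
        rw [Fpart_succ hx, Fpart_append hy, hφ, EReal.coe_add]

end Cost

theorem W_recurrence_general [Fintype D] (Γ : Set (GPred D))
    (n : ℕ) (c : GPred D → ℕ → ℕ → ℝ)
    (hneg : ∀ ρ i j, Lam Γ n ρ i j → c ρ i j ≤ 0) :
    ∀ α ∈ piClosure Γ, 1 ≤ α.ar → ∀ s : ℕ, 1 ≤ s → s ≤ n →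
      W Γ n c s α =
        min (sInf {z : EReal | ∃ β : GPred D, HasseGe (piClosure Γ) α β ∧ z = W Γ n c s β})
            (W Γ n c (s - 1) α.minus + ((phi Γ n c s α : ℝ) : EReal)) := by
  intro α hα har s hs _
  obtain ⟨t, rfl⟩ : ∃ t, s = t + 1 := ⟨s - 1, by omega⟩
  rw [Nat.add_sub_cancel]
  refine le_antisymm (le_min ?_ (W_succ_le hneg har)) ?_
  · exact le_sInf fun _ ⟨β, hαβ, hz⟩ => hz ▸ W_anti hαβ.2.2.1.1
  · exact min_le_W_succ (subset_piClosure Γ) (interClosed_piClosure Γ) hα har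

/-- for nonpositive weights, the DP values satisfy
`W_s(α) = min{ min_{(α,β) ∈ Hasse(closure(Γ^∩), ≥)} W_s(β), W_{s-1}(α⁻) + φ_s(α) }`. -/
theorem W_recurrence [Fintype D] (Γ : Set (GPred D)) (hfin : Γ.Finite)
    (n : ℕ) (c : GPred D → ℕ → ℕ → ℝ)
    (hneg : ∀ ρ i j, Lam Γ n ρ i j → c ρ i j ≤ 0) :
    ∀ α ∈ piClosure Γ, 1 ≤ α.ar → ∀ s : ℕ, 1 ≤ s → s ≤ n →
      W Γ n c s α =
        min (sInf {z : EReal | ∃ β : GPred D, HasseGe (piClosure Γ) α β ∧ z = W Γ n c s β})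
            (W Γ n c (s - 1) α.minus + ((phi Γ n c s α : ℝ) : EReal)) :=
  W_recurrence_general Γ n c hneg

end GPred
end
end

section
/- Let Γ* be a prefix, intersection, and singleton-suffix closed finite set of predicates over D, and let α ∈ Γ* with ‖α‖ ≥ 1. If the projection of α onto its last coordinate has more than one element, then X_s(α; Γ*) = ∅ for all s ≥ ‖α‖. -/
open scoped Classical

noncomputable section

open GPred in
/-- if the projection of `α ∈ Γ*` onto its last coordinate has more than
one element, then `X_s(α; Γ*) = ∅` for all `s ≥ ‖α‖`. -/
theorem X_empty_of_projLast_not_singleton {D : Type*} [Fintype D] (G : Set (GPred D))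
    (hfin : G.Finite) (hpref : PrefClosed G) (hint : InterClosed G) (hss : SSClosed G)
    (α : GPred D) (hα : α ∈ G) (har : 1 ≤ α.ar)
    (hproj : ∃ a ∈ projLast α, ∃ b ∈ projLast α, a ≠ b) :
    ∀ s : ℕ, α.ar ≤ s → X s α G = ∅ := by
  intro s hs
  ext x
  simp only [X, Set.mem_setOf_eq, Set.mem_empty_iff_false, iff_false, not_and]
  intro hlen hxα hmin
  obtain ⟨hle, hsuf⟩ := hxα
  set u := x.drop (x.length - α.ar) with hu
  have hulen : u.length = α.ar := α.len u hsuf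
  have hune : u ≠ [] := by
    intro h; rw [h] at hulen; simp at hulen; omega
  obtain ⟨u', c, huc⟩ : ∃ u' c, u = u' ++ [c] :=
    ⟨u.dropLast, u.getLast hune, (u.dropLast_append_getLast hune).symm⟩
  obtain ⟨a, ha, b, hb, hab⟩ := hproj
  obtain ⟨d, hd, hdc⟩ : ∃ d ∈ projLast α, d ≠ c := by
    by_cases h : a = c
    · exact ⟨b, hb, by rw [← h]; exact hab.symm⟩
    · exact ⟨a, ha, h⟩
  obtain ⟨w, hw⟩ := hd
  set σ := α.sufSingle c with hσ
  have hσar : σ.ar = α.ar := rfl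
  set β := α.bar σ with hβ
  have hβG : β ∈ G := hint α hα σ (hss α hα har c)
  have hif : σ.ar ≤ α.ar := le_of_eq hσar
  have hβar : β.ar = α.ar := by rw [hβ, bar, if_pos hif]
  have hβs : β.s = {v | v ∈ α.s ∧ v.drop (α.ar - σ.ar) ∈ σ.s} := by
    rw [hβ, bar, if_pos hif]
  have hσs : σ.s = {v | ∃ w', (∃ b : D, w' ++ [b] ∈ α.s) ∧ v = w' ++ [c]} := rfl
  have hdrop0 : α.ar - σ.ar = 0 := by rw [hσar]; omega
  -- x ∈ β.star
  have hxβ : x ∈ β.star := by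
    refine ⟨by rw [hβar]; exact hle, ?_⟩
    rw [hβar, ← hu, hβs]
    refine ⟨hsuf, ?_⟩
    rw [hdrop0, List.drop_zero, hσs]
    exact ⟨u', ⟨c, huc ▸ hsuf⟩, huc⟩
  -- pgt α β
  have hpge : pge α β := by
    intro y hy
    obtain ⟨hy1, hy2⟩ := hy
    rw [hβar] at hy1 hy2
    rw [hβs] at hy2
    exact ⟨hy1, hy2.1⟩
  have hne : α ≠ β := by
    intro h
    have : w ++ [d] ∈ β.s := by rw [← h]; exact hw
    rw [hβs] at this
    obtain ⟨-, hmem⟩ := this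
    rw [hdrop0, List.drop_zero, hσs] at hmem
    obtain ⟨w', -, heq⟩ := hmem
    have := (List.append_inj' heq rfl).2
    simp at this
    exact hdc this
  exact hmin β hβG ⟨hpge, hne⟩ hxβ
end
end

section
/- Let Γ* be a prefix, intersection, and singleton-suffix closed finite set of predicates over D, and α ∈ Γ* with ‖α‖ ≥ 1 such that the projection of α onto its last coordinate is a singleton {a}. Then X_s(α; Γ*) = T × {a}, where T = {x ∈ D^{s−1} : x ∈ *(α⁻), and for every edge (α,γ) in the Hasse diagram of (Γ*, ≥), x ∉ *(γ⁻)}. -/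
open scoped Classical

noncomputable section

/-!
Every word of `*α` ends in `a`, so for `γ ≤ α` with `‖γ‖ ≥ 1`, `y ∈ *(γ⁻)` iff `y ++ [a] ∈ *γ`.
This gives both the shape `T × {a}` and the `*α⁻` condition. For the remaining condition,
a word of `*α` lying in `*β` for some `β < α` in the finite set `Γ*` also lies in `*γ` for a
Hasse edge `(α, γ)`: take `γ` with maximal `*γ` among such `β`.
-/

namespace GPred

variable {D : Type*} {α β γ : GPred D} {y : List D} {b : D}

lemma mem_star_of_mem (hw : y ∈ γ.s) : y ∈ γ.star := by
  simp [star, γ.len y hw, hw]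

lemma mem_iff_mem_star_and_length : y ∈ γ.s ↔ y ∈ γ.star ∧ y.length = γ.ar :=
  ⟨fun hy => ⟨mem_star_of_mem hy, γ.len y hy⟩,
   fun ⟨hy, hlen⟩ => by simpa [hlen] using hy.2⟩

lemma ext_of_ar_eq_of_s_eq {δ : GPred D} (har : γ.ar = δ.ar) (hs : γ.s = δ.s) : γ = δ := by
  cases γ; cases δ
  cases har; cases hs
  rfl

lemma ar_le_of_star_subset_s11 {δ : GPred D} (h : γ.star ⊆ δ.star) (hne : γ.s.Nonempty) :
    δ.ar ≤ γ.ar := by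
  obtain ⟨w, hw⟩ := hne
  simpa [γ.len w hw] using (h (mem_star_of_mem hw)).1

lemma eq_of_star_eq_s11 {δ : GPred D} (h : γ.star = δ.star) (hne : γ.star.Nonempty) : γ = δ := by
  obtain ⟨v, hv⟩ := hne
  have hγ : γ.s.Nonempty := ⟨_, hv.2⟩
  have hδ : δ.s.Nonempty := ⟨_, (h ▸ hv : v ∈ δ.star).2⟩
  have har : γ.ar = δ.ar :=
    le_antisymm (ar_le_of_star_subset_s11 h.ge hδ) (ar_le_of_star_subset_s11 h.le hγ)
  refine ext_of_ar_eq_of_s_eq har (Set.ext fun w => ?_)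
  rw [mem_iff_mem_star_and_length, mem_iff_mem_star_and_length, h, har]

lemma append_singleton_mem_star_iff (hγ : 1 ≤ γ.ar) :
    y ++ [b] ∈ γ.star ↔ γ.ar - 1 ≤ y.length ∧ y.drop (y.length - (γ.ar - 1)) ++ [b] ∈ γ.s := by
  simp only [star, Set.mem_ofPred_eq, List.length_append, List.length_singleton]
  rw [show γ.ar ≤ y.length + 1 ↔ γ.ar - 1 ≤ y.length by omega]
  refine and_congr_right fun hle => ?_
  rw [List.drop_append_of_le_length (by omega), show y.length + 1 - γ.ar = y.length - (γ.ar - 1)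
    by omega]

lemma mem_minus_star_iff_s11 (hγ : 1 ≤ γ.ar) : y ∈ γ.minus.star ↔ ∃ b, y ++ [b] ∈ γ.star := by
  simp only [append_singleton_mem_star_iff hγ]
  exact ⟨fun ⟨hle, b, hb⟩ => ⟨b, hle, hb⟩, fun ⟨b, hle, hb⟩ => ⟨hle, b, hb⟩⟩

lemma one_le_ar_of_mem_minus_star (hy : y ∈ γ.minus.star) : 1 ≤ γ.ar := by
  obtain ⟨b, hb⟩ := hy.2
  have := γ.len _ hb
  simp only [List.length_append, List.length_singleton] at this
  omega

lemma one_le_ar_of_pge (hα : 1 ≤ α.ar) (hαγ : pge α γ) (hne : γ.star.Nonempty) : 1 ≤ γ.ar := by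
  by_contra! h
  obtain ⟨v, hv⟩ := hne
  have hnil : ([] : List D) ∈ γ.star := by
    simpa [star, Nat.lt_one_iff.mp h] using hv.2
  have := (hαγ hnil).1
  simp only [List.length_nil] at this
  omega

lemma mem_projLast_of_append_mem_star (hα : 1 ≤ α.ar) (h : y ++ [b] ∈ α.star) :
    b ∈ α.projLast :=
  ⟨_, ((append_singleton_mem_star_iff hα).mp h).2⟩

lemma mem_minus_star_iff_append_mem_star {a : D} (hα : 1 ≤ α.ar) (hproj : α.projLast = {a})
    (hγ : 1 ≤ γ.ar) (hαγ : pge α γ) : y ∈ γ.minus.star ↔ y ++ [a] ∈ γ.star := by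
  rw [mem_minus_star_iff_s11 hγ]
  refine ⟨fun ⟨b, hb⟩ => ?_, fun h => ⟨a, h⟩⟩
  have hba : b ∈ α.projLast := mem_projLast_of_append_mem_star hα (hαγ hb)
  rw [hproj, Set.mem_singleton_iff] at hba
  rwa [← hba]

lemma exists_hasseGe_of_pgt {G : Set (GPred D)} {x : List D} (hfin : G.Finite) (hα : α ∈ G)
    (hβ : β ∈ G) (hαβ : pgt α β) (hx : x ∈ β.star) : ∃ γ, HasseGe G α γ ∧ x ∈ γ.star := by
  let S := {γ ∈ G | pgt α γ ∧ x ∈ γ.star}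
  obtain ⟨γ, ⟨hγG, hαγ, hxγ⟩, hmax⟩ :=
    (hfin.subset fun _ h => h.1).exists_maximalFor star S ⟨β, hβ, hαβ, hx⟩
  refine ⟨γ, ⟨hα, hγG, hαγ, ?_⟩, hxγ⟩
  rintro ⟨δ, hδG, hαδ, hδγ, hne⟩
  have hδS : δ ∈ S := ⟨hδG, hαδ, hδγ hxγ⟩
  exact hne (eq_of_star_eq_s11 ((hmax hδS hδγ).antisymm hδγ) ⟨x, hδγ hxγ⟩)

end GPred

open GPred in
theorem X_eq_T_append_general {D : Type*} (G : Set (GPred D))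
    (hfin : G.Finite)
    (α : GPred D) (hα : α ∈ G) (har : 1 ≤ α.ar) (a : D)
    (hproj : projLast α = {a}) (s : ℕ) (hs : 1 ≤ s) :
    X s α G =
      {x | ∃ y : List D,
        (y.length = s - 1 ∧ y ∈ α.minus.star ∧
          ∀ γ : GPred D, HasseGe G α γ → y ∉ γ.minus.star) ∧
        x = y ++ [a]} := by
  have key {γ : GPred D} (hγ : 1 ≤ γ.ar) (hαγ : pge α γ) {y : List D} :
      y ∈ γ.minus.star ↔ y ++ [a] ∈ γ.star :=
    mem_minus_star_iff_append_mem_star har hproj hγ hαγ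
  ext x
  constructor
  · rintro ⟨hlen, hxα, hxX⟩
    obtain rfl | ⟨y, b, rfl⟩ := x.eq_nil_or_concat'
    · simp at hlen; omega
    obtain rfl : b = a := by
      simpa [hproj] using mem_projLast_of_append_mem_star har hxα
    refine ⟨y, ⟨by simp at hlen; omega, (key har subset_rfl).mpr hxα, ?_⟩, rfl⟩
    rintro γ ⟨-, hγG, hαγ, -⟩ hy
    exact hxX γ hγG hαγ ((key (one_le_ar_of_mem_minus_star hy) hαγ.1).mp hy)
  · rintro ⟨y, ⟨hylen, hyα, hyT⟩, rfl⟩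
    refine ⟨by simp; omega, (key har subset_rfl).mp hyα, fun β hβ hαβ hx => ?_⟩
    obtain ⟨γ, hedge, hxγ⟩ := exists_hasseGe_of_pgt hfin hα hβ hαβ hx
    have hαγ : pge α γ := hedge.2.2.1.1
    exact hyT γ hedge ((key (one_le_ar_of_pge har hαγ ⟨_, hxγ⟩) hαγ).mpr hxγ)

open GPred in
/-- if the projection of `α ∈ Γ*` onto its last coordinate is `{a}`,
then `X_s(α; Γ*) = T × {a}` with
`T = {x ∈ D^{s-1} : x ∈ *(α⁻), ∀ Hasse edges (α,γ), x ∉ *(γ⁻)}`. -/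
theorem X_eq_T_append {D : Type*} [Fintype D] (G : Set (GPred D))
    (hfin : G.Finite) (hpref : PrefClosed G) (hint : InterClosed G) (hss : SSClosed G)
    (α : GPred D) (hα : α ∈ G) (har : 1 ≤ α.ar) (a : D)
    (hproj : projLast α = {a}) (s : ℕ) (hs : 1 ≤ s) :
    X s α G =
      {x | ∃ y : List D,
        (y.length = s - 1 ∧ y ∈ α.minus.star ∧
          ∀ γ : GPred D, HasseGe G α γ → y ∉ γ.minus.star) ∧
        x = y ++ [a]} :=
  X_eq_T_append_general G hfin α hα har a hproj s hs
end
end
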